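/- Let N, M be positive integers with M a proper divisor of N, and let λ_0, …, λ_{N−1} ∈ ℂ be pairwise distinct. Then the bilinear form (x,y) := tr((xy − yx)·D), where D = diag(λ_0, …, λ_{N−1}), is non-degenerate on A_{N,M}; that is, for every nonzero x ∈ A_{N,M} there exists y ∈ A_{N,M} with (x,y) ≠ 0. -/

import Mathlib

/-!
If `x ∈ A_{N,M}` pairs to zero with all of `A_{N,M}`, testing against `E_{ba} - E_{b'a}` with
`b ≡ b' (mod M)` shows that `x_{ab} (λ_b - λ_a)` depends only on `a` and the class of `b`.
For `a ≡ b` this forces `x_{ab} = 0` off the diagonal, and then on it by the column condition.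
For `a`, `b` in different classes `R`, `S`, the column condition says that
`c_a := x_{ab} (λ_b - λ_a)` satisfies `∑_{a ∈ R} c_a / (λ_{b'} - λ_a) = 0` for all `b' ∈ S`,
i.e. `c` lies in the kernel of a Cauchy matrix with `|R| = |S|`. That kernel is trivial: by the
barycentric Lagrange formula the sum is, up to a nodal factor, the value at `λ_{b'}` of a
polynomial of degree `< |R|` whose values at the nodes `λ_a` are nonzero multiples of the `c_a`.
-/

open Matrix BigOperators Finset

/-- Membership in the algebra `A_{N,M}`: an `N × N` complex matrix belongs to `A_{N,M}` iff
for every residue class `r` mod `M` and every column `j`, the sum of the entries in column `j`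
over rows congruent to `r` mod `M` vanishes. -/
def memA (N M : ℕ) (A : Matrix (Fin N) (Fin N) ℂ) : Prop :=
  ∀ r : Fin M, ∀ j : Fin N,
    ∑ i ∈ Finset.univ.filter (fun i : Fin N => (i : ℕ) % M = (r : ℕ)), A i j = 0

/-- The bilinear form `(x, y) = tr((xy - yx) ⬝ diag(λ))`. -/
noncomputable def form (N : ℕ) (lam : Fin N → ℂ) (x y : Matrix (Fin N) (Fin N) ℂ) : ℂ :=
  Matrix.trace ((x * y - y * x) * Matrix.diagonal lam)

open Polynomial in
theorem Lagrange.eq_zero_of_forall_sum_div_sub_eq_zero {F ι κ : Type*} [Field F] [DecidableEq ι]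
    {s : Finset ι} {t : Finset κ} {α : ι → F} {β : κ → F} (hα : Set.InjOn α s)
    (hβ : Set.InjOn β t) (hαβ : ∀ i ∈ s, ∀ j ∈ t, β j ≠ α i) (hst : #s ≤ #t) {c : ι → F}
    (hc : ∀ j ∈ t, ∑ i ∈ s, c i / (β j - α i) = 0) : ∀ i ∈ s, c i = 0 := by
  set r : ι → F := fun i => (nodalWeight s α i)⁻¹ * c i
  have hr : interpolate s α r = 0 := by
    refine eq_zero_of_degree_lt_of_eval_index_eq_zero t hβ
      ((degree_interpolate_lt _ hα).trans_le (by exact_mod_cast hst)) fun j hj => ?_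
    rw [eval_interpolate_not_at_node r (hαβ · · j hj), ← mul_zero (eval (β j) (nodal s α)),
      ← hc j hj]
    congr 1
    refine sum_congr rfl fun i hi => ?_
    simp only [r, div_eq_mul_inv]
    field_simp [nodalWeight_ne_zero hα hi]
  intro i hi
  have := eval_interpolate_at_node r hα hi
  rw [hr, eval_zero] at this
  simpa [r, nodalWeight_ne_zero hα hi] using this.symm

theorem Fin.card_filter_univ_val_eq_count (p : ℕ → Prop) [DecidablePred p] (n : ℕ) :
    #{i : Fin n | p i} = Nat.count p n := by
  rw [Nat.count_eq_card_filter_range, card_filter, card_filter,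
    Fin.sum_univ_eq_sum_range (fun i => if p i then 1 else 0)]

theorem card_filter_mod_eq_of_dvd {N M : ℕ} (hM : 0 < M) (hMN : M ∣ N) (v : ℕ) :
    #{i : Fin N | (i : ℕ) % M = v % M} = N / M := by
  have := Nat.count_modEq_card N hM v
  rw [Nat.mod_eq_zero_of_dvd hMN, if_neg (Nat.not_lt_zero _), add_zero] at this
  exact (Fin.card_filter_univ_val_eq_count (· ≡ v [MOD M]) N).trans this

section Form

variable {N M : ℕ} {lam : Fin N → ℂ} {x : Matrix (Fin N) (Fin N) ℂ}

theorem form_eq_trace_mul (y : Matrix (Fin N) (Fin N) ℂ) :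
    form N lam x y = trace (y * (diagonal lam * x - x * diagonal lam)) := by
  rw [form, Matrix.sub_mul, trace_sub, trace_mul_cycle, trace_mul_comm, Matrix.mul_sub, trace_sub,
    Matrix.mul_assoc]

theorem form_sub_right (y z : Matrix (Fin N) (Fin N) ℂ) :
    form N lam x (y - z) = form N lam x y - form N lam x z := by
  simp only [form_eq_trace_mul, Matrix.sub_mul, trace_sub]

theorem form_single_right (i j : Fin N) (c : ℂ) :
    form N lam x (single j i c) = c * (x i j * (lam i - lam j)) := by
  rw [form_eq_trace_mul, trace_single_mul, Matrix.sub_apply, diagonal_mul, mul_diagonal,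
    smul_eq_mul]
  ring

theorem memA_single_sub_single {a b b' : Fin N} (hbb : (b : ℕ) % M = b' % M) :
    memA N M (single b a 1 - single b' a 1) := by
  intro r j
  rcases eq_or_ne a j with rfl | hj
  · simp only [Matrix.sub_apply, single_apply, and_true, sum_sub_distrib, sum_ite_eq, mem_filter,
      mem_univ, true_and, hbb, sub_self]
  · simp [hj]

variable (horth : ∀ y, memA N M y → form N lam x y = 0)
include horth

theorem mul_sub_eq_of_forall_form_eq_zero (a : Fin N) {b b' : Fin N}
    (hbb : (b : ℕ) % M = b' % M) : x a b * (lam b - lam a) = x a b' * (lam b' - lam a) := by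
  have := horth _ (memA_single_sub_single (a := a) hbb)
  rw [form_sub_right, form_single_right, form_single_right] at this
  linear_combination -this

theorem apply_eq_zero_of_mod_eq (hM : 0 < M) (hlam : Function.Injective lam) (hx : memA N M x)
    {a b : Fin N} (hab : (a : ℕ) % M = b % M) : x a b = 0 := by
  have off_diag : ∀ a b : Fin N, (a : ℕ) % M = b % M → a ≠ b → x a b = 0 := by
    intro a b hab hne
    have := mul_sub_eq_of_forall_form_eq_zero horth a hab.symm
    rw [sub_self, mul_zero, mul_eq_zero, sub_eq_zero] at this
    exact this.resolve_right (hlam.ne hne.symm)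
  rcases eq_or_ne a b with rfl | hne
  · have hcol := hx ⟨a % M, Nat.mod_lt _ hM⟩ a
    rwa [sum_eq_single_of_mem a (by simp) fun i hi hia => off_diag i a (by simpa using hi) hia]
      at hcol
  · exact off_diag a b hab hne

theorem apply_eq_zero_of_mod_ne (hM : 0 < M) (hMN : M ∣ N) (hlam : Function.Injective lam)
    (hx : memA N M x) {a b : Fin N} (hab : (a : ℕ) % M ≠ b % M) : x a b = 0 := by
  have hne : ∀ {i j : Fin N}, (i : ℕ) % M = a % M → (j : ℕ) % M = b % M → lam j ≠ lam i :=
    fun hi hj hji => hab (by rw [← hi, ← hj, hlam hji])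
  have hcauchy := Lagrange.eq_zero_of_forall_sum_div_sub_eq_zero
    (s := {i : Fin N | (i : ℕ) % M = a % M}) (t := {j : Fin N | (j : ℕ) % M = b % M})
    (c := fun i => x i b * (lam b - lam i)) hlam.injOn hlam.injOn
    (fun i hi j hj => hne (by simpa using hi) (by simpa using hj))
    (by rw [card_filter_mod_eq_of_dvd hM hMN, card_filter_mod_eq_of_dvd hM hMN]) ?_ a (by simp)
  · exact (mul_eq_zero.mp hcauchy).resolve_right (sub_ne_zero.mpr (hne rfl rfl))
  · intro j hj
    rw [mem_filter] at hj
    calc ∑ i ∈ {i : Fin N | (i : ℕ) % M = a % M}, x i b * (lam b - lam i) / (lam j - lam i)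
        = ∑ i ∈ {i : Fin N | (i : ℕ) % M = a % M}, x i j := by
          refine sum_congr rfl fun i hi => ?_
          rw [mul_sub_eq_of_forall_form_eq_zero horth i (hj.2.symm),
            mul_div_cancel_right₀ _ (sub_ne_zero.mpr (hne (by simpa using hi) hj.2))]
      _ = 0 := hx ⟨a % M, Nat.mod_lt _ hM⟩ j

theorem eq_zero_of_forall_form_eq_zero (hM : 0 < M) (hMN : M ∣ N)
    (hlam : Function.Injective lam) (hx : memA N M x) : x = 0 :=
  ext fun a b => if hab : (a : ℕ) % M = b % M then apply_eq_zero_of_mod_eq horth hM hlam hx hab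
    else apply_eq_zero_of_mod_ne horth hM hMN hlam hx hab

end Form

theorem form_nondegenerate_on_Asub_of_distinct_general (N M : ℕ) (hM : 0 < M) (hMN : M ∣ N)
    (lam : Fin N → ℂ) (hlam : Function.Injective lam) :
    ∀ x : Matrix (Fin N) (Fin N) ℂ, memA N M x → x ≠ 0 →
      ∃ y : Matrix (Fin N) (Fin N) ℂ, memA N M y ∧ form N lam x y ≠ 0 := by
  intro x hx hx0
  by_contra! horth
  exact hx0 (eq_zero_of_forall_form_eq_zero horth hM hMN hlam hx)

/-- For pairwise distinct `λ_0, …, λ_{N-1}`, the form `(x,y) = tr((xy-yx)·diag(λ))` is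
non-degenerate on `A_{N,M}`. -/
theorem form_nondegenerate_on_Asub_of_distinct (N M : ℕ) (hM : 0 < M) (hMN : M ∣ N)
    (hlt : M < N) (lam : Fin N → ℂ) (hlam : Function.Injective lam) :
    ∀ x : Matrix (Fin N) (Fin N) ℂ, memA N M x → x ≠ 0 →
      ∃ y : Matrix (Fin N) (Fin N) ℂ, memA N M y ∧ form N lam x y ≠ 0 :=
  form_nondegenerate_on_Asub_of_distinct_general N M hM hMN lam hlam
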